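/- Let f ∈ G_s(Z) and γ > 4. Then for every (x,x*) ∈ X × X* and every α > 0 there exists (x_α, x_α*) ∈ M_f such that ‖x_α − x‖² + α² ‖x_α* − x*‖² ≤ γ α ( f(x,x*) − ⟨x,x*⟩ ) (trivially, any element of M_f works when f(x,x*) = +∞). -/

import Mathlib

/-!
Write `j_β(x, x*) := ‖x‖²/(2β) + β‖x*‖²/2`, so that `|c| ≤ j_β` and `j_β*(u*, u**) ≥ -c(u*, u**)`.
Separating the epigraph of `w ↦ f(z₀ + w)` from the strict hypograph of the concave function
`w ↦ c(z₀ + w) - c(w) + δ - j_β(w)` would give an affine function between them, which `f* ≥ c` and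
the bound on `j_β*` rule out; so some `w` has `f(z₀ + w) ≤ c(z₀ + w) - c(w) + δ - j_β(w)`.
Moving from `z₀` by `24/25 • w` (with `β = α`), convexity of `f` and `|c| ≤ j_α` divide the gap
`f - c` by `16` at a cost `‖Δx‖² + α²‖Δx*‖² ≤ 2α (f - c)(z₀)`. Iterating, the steps shrink
geometrically with ratio `1/4` in the norm `(‖x‖² + α²‖x*‖²)^(1/2)`; the iterates converge, lower
semicontinuity of `f` puts the limit in `M_f`, and its squared distance to the start is at most
`(4/3)² · 2α (f - c)(z) = 32/9 · α (f - c)(z)`.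
-/

open NormedSpace

noncomputable section

/-- The coupling `c(x, x*) := ⟨x, x*⟩` on `Z := X × X*`. -/
def coup (X : Type*) [NormedAddCommGroup X] [NormedSpace ℝ X]
    (z : X × StrongDual ℝ X) : ℝ := z.2 z.1

/-- The coupling `c(u*, u**) := ⟨u*, u**⟩` on `Z* := X* × X**`. -/
def coupS (X : Type*) [NormedAddCommGroup X] [NormedSpace ℝ X]
    (p : StrongDual ℝ X × StrongDual ℝ (StrongDual ℝ X)) : ℝ := p.2 p.1

/-- The Fenchel conjugate `f* : X* × X** → ℝ ∪ {±∞}` of `f : Z → ℝ ∪ {+∞}`. -/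
def conjF (X : Type*) [NormedAddCommGroup X] [NormedSpace ℝ X]
    (f : X × StrongDual ℝ X → EReal) (p : StrongDual ℝ X × StrongDual ℝ (StrongDual ℝ X)) : EReal :=
  ⨆ z : X × StrongDual ℝ X, (((p.1 z.1 + p.2 z.2 : ℝ) : EReal) - f z)

/-- `M_f := {z | f z = c z}`. -/
def Mset (X : Type*) [NormedAddCommGroup X] [NormedSpace ℝ X]
    (f : X × StrongDual ℝ X → EReal) : Set (X × StrongDual ℝ X) :=
  {z | f z = ((coup X z : ℝ) : EReal)}

open Filter Topology Set

theorem LowerSemicontinuous.le_of_tendsto_of_le {Y ι : Type*} [TopologicalSpace Y] {l : Filter ι}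
    [l.NeBot] {g : Y → EReal} (hg : LowerSemicontinuous g) {u : ι → Y} {y : Y}
    (hu : Tendsto u l (𝓝 y)) {v : ι → ℝ} {a : ℝ} (hv : Tendsto v l (𝓝 a))
    (hle : ∀ i, g (u i) ≤ v i) : g y ≤ a := by
  by_contra! hlt
  obtain ⟨t, hat, htg⟩ := EReal.lt_iff_exists_real_btwn.mp hlt
  have hgt : ∀ᶠ i in l, (t : EReal) < g (u i) := hu.eventually (hg y t htg)
  have hvt : ∀ᶠ i in l, v i < t := hv.eventually (gt_mem_nhds (EReal.coe_lt_coe_iff.mp hat))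
  obtain ⟨i, hgi, hvi⟩ := (hgt.and hvt).exists
  exact (hgi.trans_le (hle i)).not_ge (EReal.coe_le_coe_iff.mpr hvi.le)

theorem exists_tendsto_of_dist_le_geometric {Y : Type*} [MetricSpace Y] [CompleteSpace Y]
    (P : Y → ℝ → Prop) {q C : ℝ} (hq : q < 1)
    (hstep : ∀ y r, P y r → ∃ y', P y' (q * r) ∧ dist y y' ≤ C * r)
    {y₀ : Y} {r₀ : ℝ} (h₀ : P y₀ r₀) :
    ∃ u : ℕ → Y, ∃ y, Tendsto u atTop (𝓝 y) ∧ (∀ n, P (u n) (q ^ n * r₀)) ∧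
      dist y₀ y ≤ C * r₀ / (1 - q) := by
  choose next hnextP hnextd using hstep
  let v : ℕ → {p : Y × ℝ // P p.1 p.2} := fun n =>
    (fun p => ⟨(next p.1.1 p.1.2 p.2, q * p.1.2), hnextP _ _ p.2⟩)^[n] ⟨(y₀, r₀), h₀⟩
  have hv : ∀ n, (v (n + 1)).1 = (next (v n).1.1 (v n).1.2 (v n).2, q * (v n).1.2) := fun n =>
    congrArg Subtype.val (Function.iterate_succ_apply' _ n _)
  have hr : ∀ n, (v n).1.2 = q ^ n * r₀ := by
    intro n
    induction n with
    | zero => simp [v]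
    | succ n ih => rw [hv]; dsimp only; rw [ih, pow_succ]; ring
  set u : ℕ → Y := fun n => (v n).1.1
  have hdist : ∀ n, dist (u n) (u (n + 1)) ≤ C * r₀ * q ^ n := by
    intro n
    simp only [u, hv]
    calc _ ≤ C * (v n).1.2 := hnextd _ _ _
      _ = C * r₀ * q ^ n := by rw [hr]; ring
  obtain ⟨y, hy⟩ := cauchySeq_tendsto_of_complete (cauchySeq_of_le_geometric q _ hq hdist)
  refine ⟨u, y, hy, fun n => hr n ▸ (v n).2, ?_⟩
  exact dist_le_of_le_geometric_of_tendsto₀ q _ hq hdist hy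

theorem ContinuousLinearMap.exists_add_sq_norm_div_lt {E : Type*} [NormedAddCommGroup E]
    [NormedSpace ℝ E] (q : StrongDual ℝ E) {β η : ℝ} (hβ : 0 < β) (hη : 0 < η) :
    ∃ x, q x + ‖x‖ ^ 2 / (2 * β) + β / 2 * ‖q‖ ^ 2 < η := by
  set ε := η / (β * ‖q‖ + 1)
  have hε : 0 < ε := by positivity
  obtain ⟨x₀, hx₀, hqx₀⟩ := q.exists_lt_apply_of_lt_opNorm (sub_lt_self ‖q‖ hε)
  obtain ⟨x₁, hx₁, hqx₁⟩ : ∃ x₁ : E, ‖x₁‖ ≤ 1 ∧ ‖q‖ - ε < q x₁ := by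
    rcases lt_abs.mp hqx₀ with h | h
    · exact ⟨x₀, hx₀.le, h⟩
    · exact ⟨-x₀, by rw [norm_neg]; exact hx₀.le, by rwa [map_neg]⟩
  refine ⟨-(β * ‖q‖) • x₁, ?_⟩
  have hq0 := norm_nonneg q
  have hnorm : ‖-(β * ‖q‖) • x₁‖ ^ 2 ≤ (β * ‖q‖) ^ 2 := by
    rw [norm_smul, norm_neg, Real.norm_of_nonneg (by positivity), mul_pow]
    exact mul_le_of_le_one_right (by positivity) (pow_le_one₀ (norm_nonneg _) hx₁)
  have hεη : β * ‖q‖ * ε < η := by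
    rw [mul_div_assoc', div_lt_iff₀ (by positivity)]
    nlinarith
  rw [map_smul, smul_eq_mul]
  have : ‖-(β * ‖q‖) • x₁‖ ^ 2 / (2 * β) ≤ β / 2 * ‖q‖ ^ 2 := by
    rw [div_le_iff₀ (by positivity)]; nlinarith
  nlinarith [mul_le_mul_of_nonneg_left hqx₁.le (by positivity : 0 ≤ β * ‖q‖)]

theorem ConcaveOn.exists_affine_between {E : Type*} [AddCommGroup E] [Module ℝ E]
    [TopologicalSpace E] [IsTopologicalAddGroup E] [ContinuousSMul ℝ E] {g : E → ℝ}
    (hg : ConcaveOn ℝ univ g) (hgc : Continuous g) {f : E → EReal}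
    (hf : Convex ℝ {p : E × ℝ | f p.1 ≤ p.2}) (hfp : ∃ z, f z ≠ ⊤)
    (hgf : ∀ z, (g z : EReal) ≤ f z) :
    ∃ (ℓ : StrongDual ℝ E) (b : ℝ), (∀ z, g z ≤ ℓ z + b) ∧ ∀ z, ((ℓ z + b : ℝ) : EReal) ≤ f z := by
  have hopen : IsOpen {p : E × ℝ | p.1 ∈ univ ∧ p.2 < g p.1} := by
    simpa using isOpen_lt continuous_snd (hgc.comp continuous_fst)
  have hdisj : Disjoint {p : E × ℝ | p.1 ∈ univ ∧ p.2 < g p.1} {p : E × ℝ | f p.1 ≤ p.2} := by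
    refine disjoint_left.mpr fun p ⟨_, hlt⟩ hle => ?_
    exact (hgf p.1).not_gt (hle.trans_lt (EReal.coe_lt_coe_iff.mpr hlt))
  obtain ⟨φ, u, hA, hB⟩ := geometric_hahn_banach_open hg.convex_strict_hypograph hopen hf hdisj
  set s := φ (0, 1)
  set ψ := φ.comp (ContinuousLinearMap.inl ℝ E ℝ)
  have hφ : ∀ z t, φ (z, t) = ψ z + t * s := fun z t => by
    rw [show ((z, t) : E × ℝ) = (z, 0) + t • (0, 1) by simp, map_add, map_smul, smul_eq_mul]
    rfl
  have hA' : ∀ z, ∀ t < g z, ψ z + t * s < u := fun z t ht => hφ z t ▸ hA (z, t) ⟨trivial, ht⟩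
  have hB' : ∀ z (t : ℝ), f z ≤ t → u ≤ ψ z + t * s := fun z t ht => hφ z t ▸ hB (z, t) ht
  have hs : 0 < s := by
    obtain ⟨z₁, hz₁⟩ := hfp
    have h₁ := hA' z₁ (g z₁ - 1) (by linarith)
    have h₂ := hB' z₁ _ (EReal.le_coe_toReal hz₁)
    have h₃ : g z₁ ≤ (f z₁).toReal :=
      EReal.coe_le_coe_iff.mp ((hgf z₁).trans (EReal.le_coe_toReal hz₁))
    nlinarith
  refine ⟨-s⁻¹ • ψ, u / s, fun z => ?_, fun z => ?_⟩
  · have : ψ z + g z * s ≤ u := by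
      have hlim : Tendsto (fun t => ψ z + t * s) (𝓝[<] g z) (𝓝 (ψ z + g z * s)) :=
        ((continuous_const.add (continuous_id.mul continuous_const)).tendsto (g z)).mono_left
          nhdsWithin_le_nhds
      exact le_of_tendsto hlim (eventually_nhdsWithin_of_forall fun t ht => (hA' z t ht).le)
    simp only [smul_apply, smul_eq_mul]
    field_simp
    linarith
  · obtain h | h := eq_or_ne (f z) ⊤
    · simp [h]
    · have hu := hB' z _ (EReal.le_coe_toReal h)
      rw [← EReal.coe_toReal h (ne_bot_of_le_ne_bot (EReal.coe_ne_bot _) (hgf z)),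
        EReal.coe_le_coe_iff]
      simp only [smul_apply, smul_eq_mul]
      field_simp
      linarith

section RepresentableFunctions

variable {X : Type*} [NormedAddCommGroup X] [NormedSpace ℝ X]

theorem coup_add (z w : X × StrongDual ℝ X) :
    coup X (z + w) = coup X z + z.2 w.1 + w.2 z.1 + coup X w := by
  simp only [coup, Prod.fst_add, Prod.snd_add, map_add, add_apply]
  ring

theorem coup_smul (t : ℝ) (w : X × StrongDual ℝ X) : coup X (t • w) = t ^ 2 * coup X w := by
  simp only [coup, Prod.smul_fst, Prod.smul_snd, map_smul, smul_apply, smul_eq_mul]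
  ring

theorem continuous_coup : Continuous (coup X) :=
  continuous_snd.clm_apply continuous_fst

def penalty (β : ℝ) (w : X × StrongDual ℝ X) : ℝ := ‖w.1‖ ^ 2 / (2 * β) + β / 2 * ‖w.2‖ ^ 2

theorem penalty_nonneg {β : ℝ} (hβ : 0 ≤ β) (w : X × StrongDual ℝ X) : 0 ≤ penalty β w := by
  unfold penalty; positivity

theorem continuous_penalty (β : ℝ) : Continuous (penalty (X := X) β) := by
  unfold penalty; fun_prop

theorem convexOn_penalty {β : ℝ} (hβ : 0 ≤ β) : ConvexOn ℝ univ (penalty (X := X) β) := by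
  have hsq : ∀ {E : Type _} [NormedAddCommGroup E] [NormedSpace ℝ E],
      ConvexOn ℝ univ fun x : E => ‖x‖ ^ 2 :=
    convexOn_univ_norm.pow (fun _ _ => norm_nonneg _) 2
  have h₁ := (hsq.comp_linearMap (LinearMap.fst ℝ X (StrongDual ℝ X))).smul
    (inv_nonneg.mpr (by positivity : (0 : ℝ) ≤ 2 * β))
  have h₂ := (hsq.comp_linearMap (LinearMap.snd ℝ X (StrongDual ℝ X))).smul
    (by positivity : (0 : ℝ) ≤ β / 2)
  have h := h₁.add h₂
  rw [preimage_univ] at h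
  refine h.congr fun w _ => ?_
  simp [penalty, div_eq_inv_mul]

theorem abs_coup_le_penalty {β : ℝ} (hβ : 0 < β) (w : X × StrongDual ℝ X) :
    |coup X w| ≤ penalty β w := by
  have hamgm : ‖w.2‖ * ‖w.1‖ ≤ penalty β w := by
    have : penalty β w - ‖w.2‖ * ‖w.1‖ = (‖w.1‖ - β * ‖w.2‖) ^ 2 / (2 * β) := by
      unfold penalty; field_simp; ring
    linarith [show 0 ≤ (‖w.1‖ - β * ‖w.2‖) ^ 2 / (2 * β) by positivity]
  exact (w.2.le_opNorm w.1).trans hamgm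

theorem exists_le_coup_sub_penalty {f : X × StrongDual ℝ X → EReal}
    (hconv : Convex ℝ {p : (X × StrongDual ℝ X) × ℝ | f p.1 ≤ (p.2 : EReal)})
    (hgeS : ∀ p, ((coupS X p : ℝ) : EReal) ≤ conjF X f p)
    {z₀ : X × StrongDual ℝ X} (hz₀ : f z₀ ≠ ⊤) {β δ : ℝ} (hβ : 0 < β) (hδ : 0 < δ) :
    ∃ w, f (z₀ + w) ≤ ((coup X (z₀ + w) - coup X w + δ - penalty β w : ℝ) : EReal) := by
  by_contra! h
  set ℓ₀ : StrongDual ℝ (X × StrongDual ℝ X) :=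
    z₀.2.comp (ContinuousLinearMap.fst ℝ X _) +
      (inclusionInDoubleDual ℝ X z₀.1).comp (ContinuousLinearMap.snd ℝ X _)
  have hℓ₀ : ∀ w, coup X (z₀ + w) - coup X w = ℓ₀ w + coup X z₀ := fun w => by
    simp only [coup_add, ℓ₀, add_apply, ContinuousLinearMap.comp_apply,
      ContinuousLinearMap.coe_fst', ContinuousLinearMap.coe_snd', dual_def]
    ring
  set g := fun w => ℓ₀ w + (coup X z₀ + δ - penalty β w)
  have hg : ConcaveOn ℝ univ g := by
    have := ((convexOn_penalty (X := X) hβ.le).neg.add_const (coup X z₀ + δ)).add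
      ((ℓ₀ : _ →ₗ[ℝ] ℝ).concaveOn convex_univ)
    refine this.congr fun w _ => ?_
    simp only [g, Pi.add_apply, Pi.neg_apply, ContinuousLinearMap.coe_coe]
    ring
  have hgc : Continuous g := ℓ₀.continuous.add (continuous_const.sub (continuous_penalty β))
  have hf : Convex ℝ {p : (X × StrongDual ℝ X) × ℝ | f (z₀ + p.1) ≤ p.2} := by
    have e : {p : (X × StrongDual ℝ X) × ℝ | f (z₀ + p.1) ≤ p.2} =
        (fun p => (z₀, 0) + p) ⁻¹' {p | f p.1 ≤ p.2} := by
      ext p; simp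
    exact e ▸ hconv.translate_preimage_right (z₀, 0)
  have hgf : ∀ w, (g w : EReal) ≤ f (z₀ + w) := fun w =>
    (EReal.coe_le_coe_iff.mpr (le_of_eq (by simp only [g]; rw [hℓ₀]; ring))).trans (h w).le
  obtain ⟨ℓ, b, hgℓ, hℓf⟩ :=
    hg.exists_affine_between (f := fun w => f (z₀ + w)) hgc hf ⟨0, by simpa using hz₀⟩ hgf
  set q₁ : StrongDual ℝ X := ℓ.comp (ContinuousLinearMap.inl ℝ X _)
  set q₂ : StrongDual ℝ (StrongDual ℝ X) := ℓ.comp (ContinuousLinearMap.inr ℝ X _)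
  have hℓ : ∀ w, ℓ w = q₁ w.1 + q₂ w.2 := fun w => by
    simp [q₁, q₂, ← map_add]
  have hconj : conjF X f (q₁, q₂) ≤ ((ℓ z₀ - b : ℝ) : EReal) := by
    refine iSup_le fun v => EReal.sub_le_of_le_add ?_
    have hv := hℓf (v - z₀)
    rw [add_sub_cancel] at hv
    calc ((q₁ v.1 + q₂ v.2 : ℝ) : EReal)
        = ((ℓ z₀ - b : ℝ) : EReal) + ((ℓ (v - z₀) + b : ℝ) : EReal) := by
          rw [← EReal.coe_add, map_sub, ← hℓ]; ring_nf
      _ ≤ _ := add_le_add le_rfl hv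
  have hcoupS : q₂ q₁ ≤ ℓ z₀ - b := EReal.coe_le_coe_iff.mp ((hgeS (q₁, q₂)).trans hconj)
  -- At `w = (x, q₁ - z₀.2)` the coupling terms cancel and `hx` is contradicted.
  obtain ⟨x, hx⟩ := (q₁ - z₀.2).exists_add_sq_norm_div_lt hβ hδ
  have hgx := hgℓ (x, q₁ - z₀.2)
  simp only [g, ℓ₀, hℓ, penalty, coup, add_apply, sub_apply, ContinuousLinearMap.comp_apply,
    ContinuousLinearMap.coe_fst', ContinuousLinearMap.coe_snd', dual_def, map_sub] at hgx hx hcoupS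
  linarith

theorem exists_gap_le_div_sixteen {f : X × StrongDual ℝ X → EReal}
    (hconv : Convex ℝ {p : (X × StrongDual ℝ X) × ℝ | f p.1 ≤ (p.2 : EReal)})
    (hge : ∀ z, ((coup X z : ℝ) : EReal) ≤ f z)
    (hgeS : ∀ p, ((coupS X p : ℝ) : EReal) ≤ conjF X f p) {α : ℝ} (hα : 0 < α)
    {z₀ : X × StrongDual ℝ X} {θ : ℝ} (hz₀ : f z₀ ≤ ((coup X z₀ + θ : ℝ) : EReal)) :
    ∃ z₁, f z₁ ≤ ((coup X z₁ + θ / 16 : ℝ) : EReal) ∧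
      ‖z₁.1 - z₀.1‖ ^ 2 + α ^ 2 * ‖z₁.2 - z₀.2‖ ^ 2 ≤ 2 * α * θ := by
  have hθ : 0 ≤ θ := by
    have := EReal.coe_le_coe_iff.mp ((hge z₀).trans hz₀)
    linarith
  rcases hθ.eq_or_lt with rfl | hθ
  · exact ⟨z₀, by simpa using hz₀, by simp⟩
  obtain ⟨w, hw⟩ := exists_le_coup_sub_penalty hconv hgeS
    (ne_top_of_le_ne_top (EReal.coe_ne_top _) hz₀) hα (show 0 < θ / 1000 by positivity)
  set z₁ := z₀ + (24 / 25 : ℝ) • w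
  have hf₁ : f z₁ ≤ ((1 / 25 * (coup X z₀ + θ) +
      24 / 25 * (coup X (z₀ + w) - coup X w + θ / 1000 - penalty α w) : ℝ) : EReal) := by
    have hcomb : (1 / 25 : ℝ) • z₀ + (24 / 25 : ℝ) • (z₀ + w) = z₁ := by
      simp only [z₁]; module
    have := hconv (show (z₀, _) ∈ _ from hz₀) (show (z₀ + w, _) ∈ _ from hw)
      (by norm_num : (0 : ℝ) ≤ 1 / 25) (by norm_num : (0 : ℝ) ≤ 24 / 25) (by norm_num)
    simp only [Prod.smul_mk, Prod.mk_add_mk, hcomb, smul_eq_mul] at this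
    exact this
  have hc₁ : coup X z₁ =
      coup X z₀ + 24 / 25 * (z₀.2 w.1 + w.2 z₀.1) + (24 / 25) ^ 2 * coup X w := by
    simp only [z₁, coup_add, coup_smul, Prod.smul_fst, Prod.smul_snd, map_smul, smul_apply,
      smul_eq_mul]
    ring
  have hlow : coup X z₁ ≤ _ := EReal.coe_le_coe_iff.mp ((hge z₁).trans hf₁)
  have hcw : -penalty α w ≤ coup X w := (abs_le.mp (abs_coup_le_penalty hα w)).1
  have hj : 0 ≤ penalty α w := penalty_nonneg hα.le w
  rw [hc₁, coup_add] at hlow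
  refine ⟨z₁, hf₁.trans (EReal.coe_le_coe_iff.mpr ?_), ?_⟩
  · rw [hc₁, coup_add]
    linarith
  · have hN : ‖z₁.1 - z₀.1‖ ^ 2 + α ^ 2 * ‖z₁.2 - z₀.2‖ ^ 2 =
        2 * α * ((24 / 25) ^ 2 * penalty α w) := by
      simp only [z₁, Prod.fst_add, Prod.snd_add, Prod.smul_fst, Prod.smul_snd, add_sub_cancel_left,
        norm_smul, penalty, Real.norm_of_nonneg (by norm_num : (0 : ℝ) ≤ 24 / 25)]
      field_simp
    rw [hN]
    have : (24 / 25) ^ 2 * penalty α w ≤ θ := by linarith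
    exact mul_le_mul_of_nonneg_left this (by positivity)

theorem exists_mem_Mset_sq_dist_le [CompleteSpace X] {f : X × StrongDual ℝ X → EReal}
    (hconv : Convex ℝ {p : (X × StrongDual ℝ X) × ℝ | f p.1 ≤ (p.2 : EReal)})
    (hge : ∀ z, ((coup X z : ℝ) : EReal) ≤ f z)
    (hgeS : ∀ p, ((coupS X p : ℝ) : EReal) ≤ conjF X f p) (hlsc : LowerSemicontinuous f)
    {α : ℝ} (hα : 0 < α) {z : X × StrongDual ℝ X} {θ : ℝ}
    (hz : f z ≤ ((coup X z + θ : ℝ) : EReal)) :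
    ∃ w ∈ Mset X f, ‖w.1 - z.1‖ ^ 2 + α ^ 2 * ‖w.2 - z.2‖ ^ 2 ≤ 32 / 9 * α * θ := by
  -- `T` turns `‖z.1‖² + α²‖z.2‖²` into the square of a complete norm.
  let T : (X × StrongDual ℝ X) ≃L[ℝ] WithLp 2 (X × StrongDual ℝ X) :=
    ((ContinuousLinearEquiv.refl ℝ X).prodCongr
      (ContinuousLinearEquiv.smulLeft (Units.mk0 α hα.ne'))).trans
      (WithLp.prodContinuousLinearEquiv 2 ℝ X (StrongDual ℝ X)).symm
  have hT : ∀ z z', dist (T z) (T z') ^ 2 = ‖z.1 - z'.1‖ ^ 2 + α ^ 2 * ‖z.2 - z'.2‖ ^ 2 := by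
    intro z z'
    rw [dist_eq_norm, ← map_sub, WithLp.prod_norm_sq_eq_of_L2]
    simp [T, norm_smul, mul_pow, abs_of_pos hα]
  have hθ : 0 ≤ θ := by
    have := EReal.coe_le_coe_iff.mp ((hge z).trans hz)
    linarith
  let P : WithLp 2 (X × StrongDual ℝ X) → ℝ → Prop := fun y r =>
    0 ≤ r ∧ f (T.symm y) ≤ ((coup X (T.symm y) + r ^ 2 / (2 * α) : ℝ) : EReal)
  have hstep : ∀ y r, P y r → ∃ y', P y' (1 / 4 * r) ∧ dist y y' ≤ 1 * r := by
    rintro y r ⟨hr, hy⟩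
    obtain ⟨z₁, hz₁, hdist⟩ := exists_gap_le_div_sixteen hconv hge hgeS hα hy
    refine ⟨T z₁, ⟨by positivity, ?_⟩, ?_⟩
    · rw [T.symm_apply_apply]
      exact hz₁.trans_eq (by congr 1; ring)
    · rw [one_mul, ← pow_le_pow_iff_left₀ dist_nonneg hr two_ne_zero, dist_comm,
        ← T.apply_symm_apply y, hT]
      refine hdist.trans_eq ?_
      field_simp
  set r₀ := Real.sqrt (2 * α * θ)
  have hz₀ : P (T z) r₀ := by
    refine ⟨Real.sqrt_nonneg _, ?_⟩
    rw [T.symm_apply_apply, Real.sq_sqrt (by positivity)]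
    exact hz.trans_eq (by congr 1; field_simp)
  obtain ⟨u, y, hu, hP, hdist⟩ :=
    exists_tendsto_of_dist_le_geometric P (by norm_num) hstep hz₀
  have hTu : Tendsto (fun n => T.symm (u n)) atTop (𝓝 (T.symm y)) :=
    (T.symm.continuous.tendsto y).comp hu
  have hbound : Tendsto (fun n => coup X (T.symm (u n)) + ((1 / 4) ^ n * r₀) ^ 2 / (2 * α))
      atTop (𝓝 (coup X (T.symm y))) := by
    have hgeom : Tendsto (fun n : ℕ => ((1 / 4 : ℝ) ^ n * r₀) ^ 2 / (2 * α)) atTop (𝓝 0) := by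
      have := (((tendsto_pow_atTop_nhds_zero_of_lt_one (by norm_num : (0 : ℝ) ≤ 1 / 4)
        (by norm_num)).mul_const r₀).pow 2).div_const (2 * α)
      rwa [zero_mul, zero_pow two_ne_zero, zero_div] at this
    have := ((continuous_coup.tendsto _).comp hTu).add hgeom
    rwa [add_zero] at this
  refine ⟨T.symm y, le_antisymm ?_ (hge _), ?_⟩
  · exact hlsc.le_of_tendsto_of_le hTu hbound fun n => (hP n).2
  · rw [← hT, T.apply_symm_apply, dist_comm]
    calc dist (T z) y ^ 2 ≤ (1 * r₀ / (1 - 1 / 4)) ^ 2 := pow_le_pow_left₀ dist_nonneg hdist 2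
      _ = 32 / 9 * α * θ := by rw [div_pow, mul_pow, Real.sq_sqrt (by positivity)]; ring

end RepresentableFunctions

theorem stmt7_general {X : Type*} [NormedAddCommGroup X] [NormedSpace ℝ X] [CompleteSpace X]
    (f : X × StrongDual ℝ X → EReal)
    (hproper : ∃ z, f z ≠ ⊤)
    (hconv : Convex ℝ {p : (X × StrongDual ℝ X) × ℝ | f p.1 ≤ (p.2 : EReal)})
    (hge : ∀ z, ((coup X z : ℝ) : EReal) ≤ f z)
    (hgeS : ∀ p, ((coupS X p : ℝ) : EReal) ≤ conjF X f p)
    (hlsc : LowerSemicontinuous f)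
    (γ : ℝ) (hγ : 4 < γ) (z : X × StrongDual ℝ X) (α : ℝ) (hα : 0 < α) :
    ∃ w ∈ Mset X f,
      ((‖w.1 - z.1‖ ^ 2 + α ^ 2 * ‖w.2 - z.2‖ ^ 2 : ℝ) : EReal)
        ≤ ((γ * α : ℝ) : EReal) * (f z - ((coup X z : ℝ) : EReal)) := by
  have hgap : ∀ z, f z ≠ ⊤ → f z ≤ ((coup X z + ((f z).toReal - coup X z) : ℝ) : EReal) :=
    fun z hz => by simpa using EReal.le_coe_toReal hz
  by_cases htop : f z = ⊤
  · obtain ⟨z₁, hz₁⟩ := hproper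
    obtain ⟨w, hw, -⟩ := exists_mem_Mset_sq_dist_le hconv hge hgeS hlsc one_pos (hgap z₁ hz₁)
    refine ⟨w, hw, ?_⟩
    rw [htop, EReal.top_sub_coe, EReal.coe_mul_top_of_pos (by positivity)]
    exact le_top
  · obtain ⟨w, hw, hdist⟩ := exists_mem_Mset_sq_dist_le hconv hge hgeS hlsc hα (hgap z htop)
    have hθ : 0 ≤ (f z).toReal - coup X z := by
      have := EReal.toReal_le_toReal (hge z) (EReal.coe_ne_bot _) htop
      rw [EReal.toReal_coe] at this
      linarith
    refine ⟨w, hw, ?_⟩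
    rw [← EReal.coe_toReal htop (ne_bot_of_le_ne_bot (EReal.coe_ne_bot _) (hge z)),
      ← EReal.coe_sub, ← EReal.coe_mul, EReal.coe_le_coe_iff]
    calc _ ≤ 32 / 9 * α * ((f z).toReal - coup X z) := hdist
      _ ≤ γ * α * ((f z).toReal - coup X z) := by gcongr; linarith

/-- for `f ∈ G_s(Z)` and `γ > 4`, every `(x, x*) ∈ Z` and every `α > 0` admit
`(x_α, x_α*) ∈ M_f` with `‖x_α - x‖² + α²‖x_α* - x*‖² ≤ γ α (f(x,x*) - ⟨x, x*⟩)`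
(the right-hand side being `+∞` when `f(x, x*) = +∞`, in `EReal`). -/
theorem stmt7 {X : Type*} [NormedAddCommGroup X] [NormedSpace ℝ X] [CompleteSpace X]
    (f : X × StrongDual ℝ X → EReal)
    (hne_bot : ∀ z, f z ≠ ⊥) (hproper : ∃ z, f z ≠ ⊤)
    (hconv : Convex ℝ {p : (X × StrongDual ℝ X) × ℝ | f p.1 ≤ (p.2 : EReal)})
    (hge : ∀ z, ((coup X z : ℝ) : EReal) ≤ f z)
    (hgeS : ∀ p, ((coupS X p : ℝ) : EReal) ≤ conjF X f p)
    (hlsc : LowerSemicontinuous f)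
    (γ : ℝ) (hγ : 4 < γ) (z : X × StrongDual ℝ X) (α : ℝ) (hα : 0 < α) :
    ∃ w ∈ Mset X f,
      ((‖w.1 - z.1‖ ^ 2 + α ^ 2 * ‖w.2 - z.2‖ ^ 2 : ℝ) : EReal)
        ≤ ((γ * α : ℝ) : EReal) * (f z - ((coup X z : ℝ) : EReal)) :=
  stmt7_general f hproper hconv hge hgeS hlsc γ hγ z α hα
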